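/- For x > 0, d > 0, P_t > 0, α > 2, integers M ≥ 1, N ≥ 1, define F_Γ(x | d) = [1 - e^{-x d^α / P_t}/(x+1)^{M-1}]^N. Then averaging over d with density f_d(r) = 2r/(ρ²-ξ²) on [ξ,ρ]: ∫_ξ^ρ F_Γ(x|r) (2r/(ρ²-ξ²)) dr = 1 + (2/(α(ρ²-ξ²))) (P_t/x)^{2/α} ∑_{m=1}^N C(N,m) (-1)^m / (m^{2/α} (x+1)^{m(M-1)}) · [Γ(2/α, x m ξ^α/P_t) - Γ(2/α, x m ρ^α/P_t)]. -/

import Mathlib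

/-!
Expanding `(1 - e^{-x r^α / P_t} / (x+1)^{M-1})^N` by the binomial theorem turns the average into a
finite sum of integrals `∫_ξ^ρ 2r e^{-k r^α} dr` with `k = x m / P_t`. The substitution `t = k r^α`
turns each of them into `(2/α) k^{-2/α} ∫_{k ξ^α}^{k ρ^α} t^{2/α - 1} e^{-t} dt`, a difference of two
upper incomplete gamma values; the `m = 0` term integrates the density to `1`.
-/

open Real

/-- Upper incomplete gamma function. -/
noncomputable def upperGamma (a x : ℝ) : ℝ := ∫ t in Set.Ioi x, t ^ (a - 1) * Real.exp (-t)

open MeasureTheory Set intervalIntegral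

theorem upperGamma_sub_upperGamma {a x₁ x₂ : ℝ} (ha : 0 < a) (hx₁ : 0 < x₁) (h : x₁ ≤ x₂) :
    upperGamma a x₁ - upperGamma a x₂ = ∫ t in x₁..x₂, t ^ (a - 1) * exp (-t) := by
  have hint : IntegrableOn (fun t : ℝ => t ^ (a - 1) * exp (-t)) (Ioi 0) := by
    simpa only [mul_comm] using GammaIntegral_convergent ha
  exact integral_Ioi_sub_Ioi (hint.mono_set (Ioi_subset_Ioi hx₁.le)) h

theorem rpow_mul_deriv_mul_rpow_sub_one {s k α r : ℝ} (hk : 0 < k) (hα : α ≠ 0) (hr : 0 < r) :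
    k * α * r ^ (α - 1) * (k ^ (-(s / α)) / α * (k * r ^ α) ^ (s / α - 1)) = r ^ (s - 1) := by
  have hk_pow : k * (k ^ (-(s / α)) * k ^ (s / α - 1)) = 1 := by
    rw [← rpow_add hk, show -(s / α) + (s / α - 1) = -1 by ring, rpow_neg_one,
      mul_inv_cancel₀ hk.ne']
  have hr_pow : r ^ (α - 1) * (r ^ α) ^ (s / α - 1) = r ^ (s - 1) := by
    rw [← rpow_mul hr.le, ← rpow_add hr]
    congr 1
    field_simp
    ring
  rw [mul_rpow hk.le (rpow_pos_of_pos hr α).le]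
  calc _ = k * (k ^ (-(s / α)) * k ^ (s / α - 1)) * (α / α) *
        (r ^ (α - 1) * (r ^ α) ^ (s / α - 1)) := by ring
    _ = r ^ (s - 1) := by rw [hk_pow, hr_pow, div_self hα, one_mul, one_mul]

theorem intervalIntegral.integral_rpow_sub_one_mul_exp_neg_mul_rpow (s : ℝ) {k α ξ ρ : ℝ}
    (hk : 0 < k) (hα : 0 < α) (hξ : 0 < ξ) (hρ : 0 < ρ) :
    ∫ r in ξ..ρ, r ^ (s - 1) * exp (-(k * r ^ α)) =
      k ^ (-(s / α)) / α * ∫ t in (k * ξ ^ α)..(k * ρ ^ α), t ^ (s / α - 1) * exp (-t) := by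
  have hpos : ∀ r ∈ uIcc ξ ρ, 0 < r := fun r hr => (lt_min hξ hρ).trans_le hr.1
  have hderiv : ∀ r ∈ uIcc ξ ρ, HasDerivAt (fun r => k * r ^ α) (k * α * r ^ (α - 1)) r := by
    intro r hr
    simpa only [mul_assoc] using (hasDerivAt_rpow_const (Or.inl (hpos r hr).ne')).const_mul k
  have hderiv_cont : ContinuousOn (fun r => k * α * r ^ (α - 1)) (uIcc ξ ρ) :=
    continuousOn_const.mul (continuousOn_id.rpow_const fun r hr => Or.inl (hpos r hr).ne')
  have hcont : ContinuousOn (fun t => t ^ (s / α - 1) * exp (-t))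
      ((fun r => k * r ^ α) '' uIcc ξ ρ) := by
    rintro _ ⟨r, hr, rfl⟩
    have : k * r ^ α ≠ 0 := (mul_pos hk (rpow_pos_of_pos (hpos r hr) α)).ne'
    exact ((continuousAt_rpow_const _ _ (Or.inl this)).mul (by fun_prop)).continuousWithinAt
  rw [← integral_const_mul, ← integral_comp_mul_deriv' hderiv hderiv_cont (hcont.const_mul _)]
  refine integral_congr fun r hr => ?_
  simp only [Function.comp]
  rw [← rpow_mul_deriv_mul_rpow_sub_one (s := s) hk hα.ne' (hpos r hr)]
  ring

theorem intervalIntegral.integral_rpow_sub_one_mul_exp_neg_mul_rpow_eq_upperGamma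
    {s k α ξ ρ : ℝ} (hs : 0 < s) (hk : 0 < k) (hα : 0 < α) (hξ : 0 < ξ) (hξρ : ξ ≤ ρ) :
    ∫ r in ξ..ρ, r ^ (s - 1) * exp (-(k * r ^ α)) =
      k ^ (-(s / α)) / α * (upperGamma (s / α) (k * ξ ^ α) - upperGamma (s / α) (k * ρ ^ α)) := by
  rw [integral_rpow_sub_one_mul_exp_neg_mul_rpow s hk hα hξ (hξ.trans_le hξρ),
    upperGamma_sub_upperGamma (div_pos hs hα) (by positivity) (by gcongr)]

theorem intervalIntegral.integral_mul_exp_neg_mul_div_mul_rpow {x m Pt α ξ ρ : ℝ} (hx : 0 < x)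
    (hm : 0 < m) (hPt : 0 < Pt) (hα : 0 < α) (hξ : 0 < ξ) (hξρ : ξ ≤ ρ) :
    ∫ r in ξ..ρ, r * exp (-(x * m / Pt * r ^ α)) =
      (Pt / x) ^ (2 / α) / (α * m ^ (2 / α)) *
        (upperGamma (2 / α) (x * m * ξ ^ α / Pt) - upperGamma (2 / α) (x * m * ρ ^ α / Pt)) := by
  have hk : 0 < x * m / Pt := by positivity
  have h := integral_rpow_sub_one_mul_exp_neg_mul_rpow_eq_upperGamma two_pos hk hα hξ hξρ
  norm_num at h
  rw [h, rpow_neg hk.le, ← inv_rpow hk.le, inv_div, ← div_div, div_rpow (by positivity) hm.le,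
    div_mul_eq_mul_div _ _ (ξ ^ α), div_mul_eq_mul_div _ _ (ρ ^ α)]
  ring

theorem avg_sinr_cdf_general (x Pt α ξ ρ : ℝ) (M N : ℕ) (hx : 0 < x) (hPt : 0 < Pt)
    (hα : 2 < α) (hξ : 0 < ξ) (hξρ : ξ < ρ) :
    ∫ r in ξ..ρ,
        (1 - Real.exp (-(x * r ^ α) / Pt) / (x + 1) ^ (M - 1)) ^ N * (2 * r / (ρ ^ 2 - ξ ^ 2)) =
      1 + (2 / (α * (ρ ^ 2 - ξ ^ 2))) * (Pt / x) ^ (2 / α) *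
        ∑ m ∈ Finset.Icc 1 N,
          (N.choose m : ℝ) * (-1 : ℝ) ^ m /
              ((m : ℝ) ^ (2 / α) * (x + 1) ^ (m * (M - 1))) *
            (upperGamma (2 / α) (x * m * ξ ^ α / Pt) -
              upperGamma (2 / α) (x * m * ρ ^ α / Pt)) := by
  have hα₀ : 0 < α := by linarith
  have hD : ρ ^ 2 - ξ ^ 2 ≠ 0 := by nlinarith
  set c : ℕ → ℝ := fun m => N.choose m * (-1) ^ m / ((x + 1) ^ (m * (M - 1)) * (ρ ^ 2 - ξ ^ 2))
  have hexpand : ∀ r, (1 - exp (-(x * r ^ α) / Pt) / (x + 1) ^ (M - 1)) ^ N *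
      (2 * r / (ρ ^ 2 - ξ ^ 2)) =
        ∑ m ∈ Finset.range (N + 1), 2 * c m * (r * exp (-(x * m / Pt * r ^ α))) := by
    intro r
    rw [sub_eq_neg_add, add_pow, Finset.sum_mul]
    refine Finset.sum_congr rfl fun m _ => ?_
    rw [neg_pow, div_pow, ← exp_nat_mul, ← pow_mul, mul_comm (M - 1)]
    simp only [c]
    field_simp
    ring_nf
  have hrpow : Continuous fun r : ℝ => r ^ α := continuous_rpow_const hα₀.le
  have hrange : Finset.range (N + 1) = insert 0 (Finset.Icc 1 N) := by
    ext m; simp only [Finset.mem_range, Finset.mem_insert, Finset.mem_Icc]; omega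
  rw [integral_congr fun r _ => hexpand r,
    integral_finsetSum fun m _ => (by fun_prop : Continuous _).intervalIntegrable _ _]
  simp_rw [intervalIntegral.integral_const_mul]
  rw [hrange, Finset.sum_insert (by simp), Finset.sum_congr rfl fun m hm => by
    rw [integral_mul_exp_neg_mul_div_mul_rpow hx (Nat.cast_pos.mpr (Finset.mem_Icc.mp hm).1)
      hPt hα₀ hξ hξρ.le]]
  simp only [c, Nat.choose_zero_right, Nat.cast_one, CharP.cast_eq_zero, mul_zero, zero_div,
    zero_mul, neg_zero, exp_zero, mul_one, integral_id, Finset.mul_sum]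
  congr 1
  · field_simp
  · exact Finset.sum_congr rfl fun m _ => by field_simp

/-- Averaging the conditional SINR CDF F_Γ(x|r) = [1 - e^{-x r^α/P_t}/(x+1)^{M-1}]^N
    over the distance density 2r/(ρ²-ξ²) on [ξ,ρ]. -/
theorem avg_sinr_cdf (x Pt α ξ ρ : ℝ) (M N : ℕ) (hx : 0 < x) (hPt : 0 < Pt)
    (hα : 2 < α) (hM : 1 ≤ M) (hN : 1 ≤ N) (hξ : 0 < ξ) (hξρ : ξ < ρ) :
    ∫ r in ξ..ρ,
        (1 - Real.exp (-(x * r ^ α) / Pt) / (x + 1) ^ (M - 1)) ^ N * (2 * r / (ρ ^ 2 - ξ ^ 2)) =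
      1 + (2 / (α * (ρ ^ 2 - ξ ^ 2))) * (Pt / x) ^ (2 / α) *
        ∑ m ∈ Finset.Icc 1 N,
          (N.choose m : ℝ) * (-1 : ℝ) ^ m /
              ((m : ℝ) ^ (2 / α) * (x + 1) ^ (m * (M - 1))) *
            (upperGamma (2 / α) (x * m * ξ ^ α / Pt) -
              upperGamma (2 / α) (x * m * ρ ^ α / Pt)) :=
  avg_sinr_cdf_general x Pt α ξ ρ M N hx hPt hα hξ hξρ
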